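/- Define the expected set length with first server σ ∈ {A,B} as T^σ = 6π₆^σ + 7π₇^σ + 8π₈^σ + 9π₉^σ + 10π₁₀^σ + 12π₁₂^σ + 13π₁₃^σ. If a, b ∈ (0,1), a > b and a + b > 1, then T^A < T^B; that is, the expected number of games in a set is strictly smaller when the player with the larger game-winning probability on serve serves first. -/
import Mathlib


noncomputable section

/-- Probability that the set ends 6-0 for the player serving first. -/
def S60 (x1 y2 : ℝ) : ℝ := (x1*y2)^3
def S61 (x1 x2 y1 y2 : ℝ) : ℝ := 3*x1^3*x2*y2^3 + 3*x1^4*y1*y2^2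
def S62 (x1 x2 y1 y2 : ℝ) : ℝ :=
  12*x1^3*x2*y1*y2^3 + 6*x1^2*x2^2*y2^4 + 3*x1^4*y1^2*y2^2
def S63 (x1 x2 y1 y2 : ℝ) : ℝ :=
  24*x1^3*x2^2*y1*y2^3 + 24*x1^4*x2*y1^2*y2^2 + 4*x1^2*x2^3*y2^4 + 4*x1^5*y1^3*y2
def S64 (x1 x2 y1 y2 : ℝ) : ℝ :=
  60*x1^3*x2^2*y1^2*y2^3 + 40*x1^2*x2^3*y1*y2^4 + 20*x1^4*x2*y1^3*y2^2
    + 5*x1*x2^4*y2^5 + x1^5*y1^4*y2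
def S75 (x1 x2 y1 y2 : ℝ) : ℝ :=
  100*x1^3*x2^3*y1^2*y2^4 + 100*x1^4*x2^2*y1^3*y2^3 + 25*x1^2*x2^4*y1*y2^5
    + 25*x1^5*x2*y1^4*y2^2 + x1*x2^5*y2^6 + x1^6*y1^5*y2

/- Set-score probabilities when A serves first, as functions of the
   game-winning-on-serve probabilities a (for A) and b (for B). -/
def SA60 (a b : ℝ) : ℝ := S60 a (1-b)
def SA06 (a b : ℝ) : ℝ := ((1-a)*b)^3
def SA61 (a b : ℝ) : ℝ := S61 a (1-a) b (1-b)
def SA16 (a b : ℝ) : ℝ := S61 (1-a) a (1-b) b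
def SA62 (a b : ℝ) : ℝ := S62 a (1-a) b (1-b)
def SA26 (a b : ℝ) : ℝ := S62 (1-a) a (1-b) b
def SA63 (a b : ℝ) : ℝ := S63 a (1-a) b (1-b)
def SA36 (a b : ℝ) : ℝ := S63 (1-a) a (1-b) b
def SA64 (a b : ℝ) : ℝ := S64 a (1-a) b (1-b)
def SA46 (a b : ℝ) : ℝ := S64 (1-a) a (1-b) b
def SA75 (a b : ℝ) : ℝ := S75 a (1-a) b (1-b)
def SA57 (a b : ℝ) : ℝ := S75 (1-a) a (1-b) b
def SA66 (a b : ℝ) : ℝ :=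
  1 - (SA60 a b + SA06 a b + SA61 a b + SA16 a b + SA62 a b + SA26 a b
        + SA63 a b + SA36 a b + SA64 a b + SA46 a b)
    - SA75 a b - SA57 a b

/- Probabilities that a set with first server A (resp. B) ends after exactly
   k games.  When B serves first the roles of a and b are interchanged. -/
def pi6A (a b : ℝ) : ℝ := SA60 a b + SA06 a b
def pi7A (a b : ℝ) : ℝ := SA61 a b + SA16 a b
def pi8A (a b : ℝ) : ℝ := SA62 a b + SA26 a b
def pi9A (a b : ℝ) : ℝ := SA63 a b + SA36 a b
def pi10A (a b : ℝ) : ℝ := SA64 a b + SA46 a b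
def pi12A (a b : ℝ) : ℝ := SA75 a b + SA57 a b
def pi13A (a b : ℝ) : ℝ := SA66 a b

def pi6B (a b : ℝ) : ℝ := pi6A b a
def pi7B (a b : ℝ) : ℝ := pi7A b a
def pi8B (a b : ℝ) : ℝ := pi8A b a
def pi9B (a b : ℝ) : ℝ := pi9A b a
def pi10B (a b : ℝ) : ℝ := pi10A b a
def pi12B (a b : ℝ) : ℝ := pi12A b a
def pi13B (a b : ℝ) : ℝ := pi13A b a

/-- Expected number of games in a set when A (resp. B) serves first. -/
def TA (a b : ℝ) : ℝ :=
  6*pi6A a b + 7*pi7A a b + 8*pi8A a b + 9*pi9A a b + 10*pi10A a b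
    + 12*pi12A a b + 13*pi13A a b

def TB (a b : ℝ) : ℝ :=
  6*pi6B a b + 7*pi7B a b + 8*pi8B a b + 9*pi9B a b + 10*pi10B a b
    + 12*pi12B a b + 13*pi13B a b

theorem expected_set_length_shift (a b : ℝ)
    (ha : a ∈ Set.Ioo (0:ℝ) 1) (hb : b ∈ Set.Ioo (0:ℝ) 1)
    (hab : a > b) (hsum : a + b > 1) : TA a b < TB a b := by
  obtain ⟨ha0, ha1⟩ := ha
  obtain ⟨hb0, hb1⟩ := hb
  have key : TB a b - TA a b = (a - b) * (a + b - 1) *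
      (56*a^3*b^3 - 84*a^3*b^2 - 84*a^2*b^3 + 36*a^3*b + 36*a*b^3 + 144*a^2*b^2
        - 4*a^3 - 4*b^3 + 9*a^2 + 9*b^2 - 72*a^2*b - 72*a*b^2 + 48*a*b - 9*a - 9*b + 4) := by
    simp only [TA, TB, pi6A, pi7A, pi8A, pi9A, pi10A, pi12A, pi13A,
      pi6B, pi7B, pi8B, pi9B, pi10B, pi12B, pi13B,
      SA60, SA06, SA61, SA16, SA62, SA26, SA63, SA36, SA64, SA46, SA75, SA57, SA66,
      S60, S61, S62, S63, S64, S75]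
    ring
  have hR : 0 < 56*a^3*b^3 - 84*a^3*b^2 - 84*a^2*b^3 + 36*a^3*b + 36*a*b^3 + 144*a^2*b^2
        - 4*a^3 - 4*b^3 + 9*a^2 + 9*b^2 - 72*a^2*b - 72*a*b^2 + 48*a*b - 9*a - 9*b + 4 := by
    nlinarith [mul_pos ha0 hb0, mul_pos (sub_pos.2 ha1) (sub_pos.2 hb1),
      mul_pos (sub_pos.2 ha1) hb0, mul_pos ha0 (sub_pos.2 hb1),
      mul_pos (mul_pos ha0 hb0) (mul_pos (sub_pos.2 ha1) (sub_pos.2 hb1)),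
      sq_nonneg (a-b), sq_nonneg (a+b-1),
      mul_pos (sub_pos.2 hsum) (mul_pos (sub_pos.2 ha1) (sub_pos.2 hb1)),
      mul_pos (mul_pos (sub_pos.2 hsum) (sub_pos.2 hsum)) (mul_pos (sub_pos.2 ha1) (sub_pos.2 hb1)),
      mul_pos (mul_pos ha0 hb0) (sub_pos.2 hsum),
      sq_nonneg ((1-a)*(1-b)), sq_nonneg (a*b - (1-a)*(1-b)),
      mul_pos (mul_pos (mul_pos ha0 hb0) (mul_pos ha0 hb0)) (mul_pos (sub_pos.2 ha1) (sub_pos.2 hb1))]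
  nlinarith [mul_pos (mul_pos (sub_pos.2 hab) (sub_pos.2 hsum)) hR]
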